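/- arXiv:2012.01656 — 2 statements merged into one kernel-verified Lean document; each statement's English description precedes it below -/
import Mathlib

section
/- Constraint-preserving application conditions (cpres): let p = ⟨L ↩ K ↪ R⟩ be a rule of finite directed multigraphs and let d be a constraint (a condition over the empty graph). Then there exists a condition ac over L such that for every direct transformation G ⇒_{p,g,h} H: the match g satisfies ac if and only if (G satisfies d implies H satisfies d). In particular, the rule p equipped with the application condition ac is d-preserving: every transformation whose match satisfies ac sends graphs satisfying d to graphs satisfying d. -/
/-- A directed multigraph: a set of nodes, a set of edges, and source/target maps. -/
structure DMGraph : Type 1 where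
  V : Type
  E : Type
  s : E → V
  t : E → V

/-- A morphism of directed multigraphs: maps on nodes and edges compatible with
sources and targets. -/
structure GraphHom (G H : DMGraph) : Type where
  fV : G.V → H.V
  fE : G.E → H.E
  src : ∀ e, H.s (fE e) = fV (G.s e)
  tgt : ∀ e, H.t (fE e) = fV (G.t e)

/-- Composition of graph morphisms. -/
def GraphHom.comp {G H K : DMGraph} (g : GraphHom H K) (f : GraphHom G H) :
    GraphHom G K where
  fV := g.fV ∘ f.fV
  fE := g.fE ∘ f.fE
  src e := by simp [g.src, f.src]
  tgt e := by simp [g.tgt, f.tgt]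

/-- A graph morphism is injective if it is injective on nodes and on edges. -/
def GraphHom.Injective {G H : DMGraph} (f : GraphHom G H) : Prop :=
  Function.Injective f.fV ∧ Function.Injective f.fE

/-- A graph is finite if its node set and edge set are finite. -/
def DMGraph.Finite (G : DMGraph) : Prop :=
  _root_.Finite G.V ∧ _root_.Finite G.E

/-- Nested graph conditions over a graph `A`: `true`, existential conditions
`∃(a, c)` along an injective morphism `a : A → C` into a finite graph `C`,
negation, and (binary) conjunction. -/
inductive Cond : DMGraph → Type 1 where
  | tru (A : DMGraph) : Cond A
  | ex {A C : DMGraph} (a : GraphHom A C) (hC : C.Finite) (ha : a.Injective)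
      (c : Cond C) : Cond A
  | not {A : DMGraph} (c : Cond A) : Cond A
  | and {A : DMGraph} (c₁ c₂ : Cond A) : Cond A

/-- Satisfaction of a condition over `A` by a morphism `A → G`. -/
def Sat {G : DMGraph} : {A : DMGraph} → GraphHom A G → Cond A → Prop
  | _, _, Cond.tru _ => True
  | _, p, Cond.ex a _ _ c => ∃ q, GraphHom.Injective q ∧ q.comp a = p ∧ Sat q c
  | _, p, Cond.not c => ¬ Sat p c
  | _, p, Cond.and c₁ c₂ => Sat p c₁ ∧ Sat p c₂

/-- A commuting square of graph morphisms is a pushout square if it commutes and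
satisfies the universal property of pushouts in the category of directed
multigraphs. -/
structure IsPushoutSq {A B C D : DMGraph} (f : GraphHom A B) (g : GraphHom A C)
    (h : GraphHom B D) (i : GraphHom C D) : Prop where
  comm : h.comp f = i.comp g
  desc : ∀ {Z : DMGraph} (u : GraphHom B Z) (v : GraphHom C Z), u.comp f = v.comp g →
    ∃! w : GraphHom D Z, w.comp h = u ∧ w.comp i = v

/-- The empty directed multigraph. -/
def DMGraph.empty : DMGraph where
  V := PEmpty
  E := PEmpty
  s := PEmpty.elim
  t := PEmpty.elim

/-- The unique morphism from the empty graph into any graph. -/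
def emptyHom (G : DMGraph) : GraphHom DMGraph.empty G where
  fV := PEmpty.elim
  fE := PEmpty.elim
  src e := e.elim
  tgt e := e.elim

/-- A graph satisfies a constraint (a condition over the empty graph) iff the unique
morphism from the empty graph satisfies it. -/
def GSat (G : DMGraph) (d : Cond DMGraph.empty) : Prop :=
  Sat (emptyHom G) d

/-!
A condition is transported along a morphism `b : A → A'` by induction on the condition: two
injections `A' → G` and `C → G` that agree on `A` factor injectively through one of the finitely
many ways of gluing `C` onto `A'` along a partial map, so an existential becomes a finite
disjunction of existentials. It is transported from the right-hand side of the rule to the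
left-hand side in the same way: the comatch extends along `a : R → C` only if deleting from `C`
what the rule deletes leaves a subgraph `Y`, and then, since the double pushout decomposes
through `Y`, extensions of the comatch along `a` correspond to extensions of the match into the
graph obtained by gluing `L` to `Y` along `K`. With `d_L` the transport of `d` to `L` and `d_R`
the transport to `L` of its transport to `R`, the match satisfies `d_L` iff `G ⊨ d` and `d_R`
iff `H ⊨ d`, so `ac = ¬ d_L ∨ d_R` works.
-/

namespace GraphHom

variable {G H K M : DMGraph}

@[ext] theorem ext {f g : GraphHom G H} (hV : f.fV = g.fV) (hE : f.fE = g.fE) : f = g := by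
  cases f; cases g; subst hV hE; rfl

theorem congr_fV {f g : GraphHom G H} (h : f = g) (x : G.V) : f.fV x = g.fV x := h ▸ rfl

theorem congr_fE {f g : GraphHom G H} (h : f = g) (x : G.E) : f.fE x = g.fE x := h ▸ rfl

protected def id (G : DMGraph) : GraphHom G G := ⟨id, id, fun _ => rfl, fun _ => rfl⟩

theorem id_comp (f : GraphHom G H) : (GraphHom.id H).comp f = f := rfl

theorem comp_assoc (h : GraphHom K M) (g : GraphHom H K) (f : GraphHom G H) :
    (h.comp g).comp f = h.comp (g.comp f) := rfl

theorem Injective.comp {g : GraphHom H K} {f : GraphHom G H} (hg : g.Injective)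
    (hf : f.Injective) : (g.comp f).Injective :=
  ⟨hg.1.comp hf.1, hg.2.comp hf.2⟩

theorem Injective.of_comp {g : GraphHom H K} {f : GraphHom G H} (h : (g.comp f).Injective) :
    f.Injective :=
  ⟨Function.Injective.of_comp (f := g.fV) h.1, Function.Injective.of_comp (f := g.fE) h.2⟩

theorem Injective.cancel_left {g : GraphHom H K} (hg : g.Injective) {f₁ f₂ : GraphHom G H}
    (h : g.comp f₁ = g.comp f₂) : f₁ = f₂ :=
  ext (funext fun x => hg.1 (congr_fV h x)) (funext fun x => hg.2 (congr_fE h x))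

theorem comp_emptyHom (g : GraphHom G H) : g.comp (emptyHom G) = emptyHom H := by
  ext x <;> exact x.elim

theorem exists_comp_eq_of_range {D : DMGraph} {d : GraphHom D G} (hd : d.Injective)
    (n : GraphHom H G) (hV : ∀ v, n.fV v ∈ Set.range d.fV) (hE : ∀ e, n.fE e ∈ Set.range d.fE) :
    ∃ m : GraphHom H D, d.comp m = n := by
  choose mV hmV using hV
  choose mE hmE using hE
  refine ⟨⟨mV, mE, fun e => hd.1 ?_, fun e => hd.1 ?_⟩, ext (funext hmV) (funext hmE)⟩
  · rw [← d.src, hmE, n.src, hmV]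
  · rw [← d.tgt, hmE, n.tgt, hmV]

end GraphHom

section SumOfOption

variable {α β : Type} {φ : α → Option β}

def PartInjective (φ : α → Option β) : Prop :=
  ∀ ⦃x x' y⦄, φ x = some y → φ x' = some y → x = x'

def sumOfOption (φ : α → Option β) (x : α) : β ⊕ {x // φ x = none} :=
  match h : φ x with
  | some y => .inl y
  | none => .inr ⟨x, h⟩

theorem sumOfOption_eq_inl_iff {x : α} {y : β} : sumOfOption φ x = .inl y ↔ φ x = some y := by
  unfold sumOfOption
  split <;> simp_all

theorem sumOfOption_of_eq_none {x : α} (h : φ x = none) : sumOfOption φ x = .inr ⟨x, h⟩ := by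
  unfold sumOfOption
  split <;> simp_all

theorem sumOfOption_injective (hφ : PartInjective φ) : Function.Injective (sumOfOption φ) := by
  intro x x' h
  cases hx : φ x with
  | some y => exact hφ hx (sumOfOption_eq_inl_iff.1 (h ▸ sumOfOption_eq_inl_iff.2 hx))
  | none =>
    cases hx' : φ x' with
    | some y => exact hφ (sumOfOption_eq_inl_iff.1 (h.symm ▸ sumOfOption_eq_inl_iff.2 hx')) hx'
    | none =>
      rw [sumOfOption_of_eq_none hx, sumOfOption_of_eq_none hx'] at h
      exact congrArg Subtype.val (Sum.inr_injective h)

theorem sumElim_sumOfOption {γ : Type} {u : β → γ} {v : α → γ}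
    (h : ∀ x y, φ x = some y → u y = v x) (x : α) :
    Sum.elim u (v ∘ Subtype.val) (sumOfOption φ x) = v x := by
  cases hx : φ x with
  | some y => rw [sumOfOption_eq_inl_iff.2 hx]; exact h x y hx
  | none => rw [sumOfOption_of_eq_none hx]; rfl

end SumOfOption

/-- For injective `f`, `g` these are exactly the pushout squares in `Type`. -/
structure IsInjPushout {α β γ δ : Type} (f : α → β) (g : α → γ) (h : β → δ) (i : γ → δ) :
    Prop where
  inl_injective : Function.Injective h
  inr_injective : Function.Injective i
  comm : ∀ a, h (f a) = i (g a)
  jointly_surjective : ∀ d, (∃ b, h b = d) ∨ ∃ c, i c = d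
  exists_of_eq : ∀ b c, h b = i c → ∃ a, f a = b ∧ g a = c

namespace IsInjPushout

variable {α β γ δ ε ζ : Type} {f : α → β} {g : α → γ} {h : β → δ} {i : γ → δ}

theorem exists_desc (po : IsInjPushout f g h i) {u : β → ζ} {v : γ → ζ}
    (huv : ∀ a, u (f a) = v (g a)) : ∃ w : δ → ζ, (∀ b, w (h b) = u b) ∧ ∀ c, w (i c) = v c := by
  have : ∀ d, ∃ z, (∀ b, h b = d → u b = z) ∧ ∀ c, i c = d → v c = z := by
    intro d
    rcases po.jointly_surjective d with ⟨b₀, rfl⟩ | ⟨c₀, rfl⟩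
    · refine ⟨u b₀, fun b hb => congrArg u (po.inl_injective hb), fun c hc => ?_⟩
      obtain ⟨a, rfl, rfl⟩ := po.exists_of_eq b₀ c hc.symm
      exact (huv a).symm
    · refine ⟨v c₀, fun b hb => ?_, fun c hc => congrArg v (po.inr_injective hc)⟩
      obtain ⟨a, rfl, rfl⟩ := po.exists_of_eq b c₀ hb
      exact huv a
  choose w hw using this
  exact ⟨w, fun b => ((hw _).1 b rfl).symm, fun c => ((hw _).2 c rfl).symm⟩

theorem of_comp {w : δ → ε} (po : IsInjPushout f g (w ∘ h) (w ∘ i))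
    (hw : Function.Injective w) : IsInjPushout f g h i where
  inl_injective := po.inl_injective.of_comp
  inr_injective := po.inr_injective.of_comp
  comm a := hw (po.comm a)
  jointly_surjective d := (po.jointly_surjective (w d)).imp
    (fun ⟨b, hb⟩ => ⟨b, hw hb⟩) (fun ⟨c, hc⟩ => ⟨c, hw hc⟩)
  exists_of_eq b c hbc := po.exists_of_eq b c (congrArg w hbc)

theorem paste {y : α → γ} {a : β → δ} {y' : γ → δ} {m : γ → ε} {q : δ → ζ} {d : ε → ζ}
    (left : IsInjPushout f y a y') (hm : Function.Injective m)
    (outer : IsInjPushout f (m ∘ y) (q ∘ a) d) (comm : ∀ v, q (y' v) = d (m v)) :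
    IsInjPushout y' m q d := by
  have eq_of_q_eq : ∀ b v, q (a b) = q (y' v) → a b = y' v := by
    intro b v hbv
    rw [comm] at hbv
    obtain ⟨κ, rfl, hκ⟩ := outer.exists_of_eq b (m v) hbv
    rw [left.comm, hm hκ]
  refine ⟨?_, outer.inr_injective, comm, ?_, ?_⟩
  · intro x x' hxx'
    rcases left.jointly_surjective x with ⟨b, rfl⟩ | ⟨v, rfl⟩ <;>
      rcases left.jointly_surjective x' with ⟨b', rfl⟩ | ⟨v', rfl⟩
    · exact congrArg a (outer.inl_injective hxx')
    · exact eq_of_q_eq b v' hxx'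
    · exact (eq_of_q_eq b' v hxx'.symm).symm
    · rw [comm, comm] at hxx'
      exact congrArg y' (hm (outer.inr_injective hxx'))
  · intro z
    exact (outer.jointly_surjective z).imp (fun ⟨b, hb⟩ => ⟨a b, hb⟩) id
  · intro x e hxe
    rcases left.jointly_surjective x with ⟨b, rfl⟩ | ⟨v, rfl⟩
    · obtain ⟨κ, rfl, rfl⟩ := outer.exists_of_eq b e hxe
      exact ⟨y κ, (left.comm κ).symm, rfl⟩
    · rw [comm] at hxe
      exact ⟨v, rfl, outer.inr_injective hxe⟩

theorem mem_range_of_comp {γ' : Type} {k : α → γ'} {a : β → ε} {y : γ' → ε} {q : ε → δ}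
    (po : IsInjPushout f g h i) (inner : IsInjPushout f k a y) (hq : Function.Injective q)
    (hqa : ∀ b, q (a b) = h b) (v : γ') : q (y v) ∈ Set.range i := by
  rcases po.jointly_surjective (q (y v)) with ⟨b, hb⟩ | hi
  · rw [← hqa] at hb
    obtain ⟨κ, rfl, rfl⟩ := inner.exists_of_eq b v (hq hb)
    exact ⟨g κ, by rw [← inner.comm, hqa, po.comm]⟩
  · exact hi

theorem mem_range_comp_iff {a : β → ε} {q : ε → δ} (po : IsInjPushout f g h i)
    (hq : Function.Injective q) (hqa : ∀ b, q (a b) = h b) (x : ε) :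
    q x ∈ Set.range i ↔ x ∉ a '' (Set.range f)ᶜ := by
  constructor
  · rintro ⟨c, hc⟩ ⟨b, hb, rfl⟩
    rw [hqa] at hc
    obtain ⟨κ, rfl, -⟩ := po.exists_of_eq b c hc.symm
    exact hb ⟨κ, rfl⟩
  · intro hx
    rcases po.jointly_surjective (q x) with ⟨b, hb⟩ | hi
    · rw [← hqa] at hb
      obtain rfl := hq hb
      obtain ⟨κ, rfl⟩ : b ∈ Set.range f := by_contra fun hb' => hx ⟨b, hb', rfl⟩
      exact ⟨g κ, by rw [← po.comm, hqa]⟩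
    · exact hi

end IsInjPushout

section MapPartialInv

variable {α β γ : Type} {f : α → β} {g : α → γ}

theorem map_partialInv_eq_some_iff (hg : Function.Injective g) {c : γ} {b : β} :
    (Option.map f ∘ Function.partialInv g) c = some b ↔ ∃ a, g a = c ∧ f a = b := by
  simp only [Function.comp_apply, Option.map_eq_some_iff]
  exact exists_congr fun a => and_congr_left' (hg.isPartialInv a c)

theorem partInjective_map_partialInv (hf : Function.Injective f) (hg : Function.Injective g) :
    PartInjective (Option.map f ∘ Function.partialInv g) := by
  intro c c' b hc hc'
  obtain ⟨a, rfl, rfl⟩ := (map_partialInv_eq_some_iff hg).1 hc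
  obtain ⟨a', rfl, ha⟩ := (map_partialInv_eq_some_iff hg).1 hc'
  rw [hf ha]

theorem isInjPushout_sumOfOption (hf : Function.Injective f) (hg : Function.Injective g) :
    IsInjPushout f g Sum.inl (sumOfOption (Option.map f ∘ Function.partialInv g)) := by
  refine ⟨Sum.inl_injective, sumOfOption_injective (partInjective_map_partialInv hf hg),
    fun a => ?_, ?_, fun b c hbc => ?_⟩
  · exact (sumOfOption_eq_inl_iff.2 ((map_partialInv_eq_some_iff hg).2 ⟨a, rfl, rfl⟩)).symm
  · rintro (b | ⟨c, hc⟩)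
    · exact .inl ⟨b, rfl⟩
    · exact .inr ⟨c, sumOfOption_of_eq_none hc⟩
  · obtain ⟨a, rfl, rfl⟩ := (map_partialInv_eq_some_iff hg).1 (sumOfOption_eq_inl_iff.1 hbc.symm)
    exact ⟨a, rfl, rfl⟩

end MapPartialInv

structure IsInjPushoutSq {A B C D : DMGraph} (f : GraphHom A B) (g : GraphHom A C)
    (h : GraphHom B D) (i : GraphHom C D) : Prop where
  V : IsInjPushout f.fV g.fV h.fV i.fV
  E : IsInjPushout f.fE g.fE h.fE i.fE

namespace IsInjPushoutSq

open GraphHom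

variable {A B C D Y Z : DMGraph} {f : GraphHom A B} {g : GraphHom A C} {h : GraphHom B D}
  {i : GraphHom C D}

theorem inl_injective (po : IsInjPushoutSq f g h i) : h.Injective :=
  ⟨po.V.inl_injective, po.E.inl_injective⟩

theorem inr_injective (po : IsInjPushoutSq f g h i) : i.Injective :=
  ⟨po.V.inr_injective, po.E.inr_injective⟩

theorem comm (po : IsInjPushoutSq f g h i) : h.comp f = i.comp g :=
  ext (funext po.V.comm) (funext po.E.comm)

theorem exists_desc (po : IsInjPushoutSq f g h i) (u : GraphHom B Z) (v : GraphHom C Z)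
    (huv : u.comp f = v.comp g) : ∃ w : GraphHom D Z, w.comp h = u ∧ w.comp i = v := by
  obtain ⟨wV, hwV₁, hwV₂⟩ := po.V.exists_desc (congr_fV huv)
  obtain ⟨wE, hwE₁, hwE₂⟩ := po.E.exists_desc (congr_fE huv)
  refine ⟨⟨wV, wE, fun ε => ?_, fun ε => ?_⟩, ext (funext hwV₁) (funext hwE₁),
    ext (funext hwV₂) (funext hwE₂)⟩
  · rcases po.E.jointly_surjective ε with ⟨e, rfl⟩ | ⟨e, rfl⟩
    · rw [hwE₁, u.src, h.src, hwV₁]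
    · rw [hwE₂, v.src, i.src, hwV₂]
  · rcases po.E.jointly_surjective ε with ⟨e, rfl⟩ | ⟨e, rfl⟩
    · rw [hwE₁, u.tgt, h.tgt, hwV₁]
    · rw [hwE₂, v.tgt, i.tgt, hwV₂]

theorem of_comp {w : GraphHom D Z} (po : IsInjPushoutSq f g (w.comp h) (w.comp i))
    (hw : w.Injective) : IsInjPushoutSq f g h i :=
  ⟨po.V.of_comp hw.1, po.E.of_comp hw.2⟩

theorem paste {y : GraphHom A Y} {y' : GraphHom Y D} {m : GraphHom Y C} {q : GraphHom D Z}
    {d : GraphHom C Z} (left : IsInjPushoutSq f y h y') (hm : m.Injective)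
    (outer : IsInjPushoutSq f (m.comp y) (q.comp h) d) (comm : q.comp y' = d.comp m) :
    IsInjPushoutSq y' m q d :=
  ⟨left.V.paste hm.1 outer.V (congr_fV comm), left.E.paste hm.2 outer.E (congr_fE comm)⟩

theorem exists_decomp {yk : GraphHom A Y} {a : GraphHom B Z} {y : GraphHom Y Z}
    {q : GraphHom Z D} (po : IsInjPushoutSq f g h i) (inner : IsInjPushoutSq f yk a y)
    (hq : q.Injective) (hqa : q.comp a = h) :
    ∃ m : GraphHom Y C, m.Injective ∧ m.comp yk = g ∧ IsInjPushoutSq y m q i := by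
  have hV := po.V.mem_range_of_comp inner.V hq.1 (congr_fV hqa)
  have hE := po.E.mem_range_of_comp inner.E hq.2 (congr_fE hqa)
  obtain ⟨m, hm⟩ := exists_comp_eq_of_range po.inr_injective (q.comp y) hV hE
  have hm_inj : m.Injective := Injective.of_comp (hm ▸ hq.comp inner.inr_injective)
  have hmk : m.comp yk = g := po.inr_injective.cancel_left <| by
    rw [← comp_assoc, hm, comp_assoc, ← inner.comm, ← comp_assoc, hqa, po.comm]
  exact ⟨m, hm_inj, hmk, inner.paste hm_inj (by rwa [hmk, hqa]) hm.symm⟩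

theorem exists_paste {yk : GraphHom A Y} {a : GraphHom B Z} {y : GraphHom Y Z}
    {m : GraphHom Y C} (po : IsInjPushoutSq f g h i) (inner : IsInjPushoutSq f yk a y)
    (hm : m.Injective) (hmk : m.comp yk = g) :
    ∃ q : GraphHom Z D, q.comp a = h ∧ IsInjPushoutSq y m q i := by
  obtain ⟨q, hqa, hqy⟩ := inner.exists_desc h (i.comp m) (by rw [comp_assoc, hmk, po.comm])
  exact ⟨q, hqa, inner.paste hm (by rwa [hmk, hqa]) hqy⟩

/-- An extension of the match `h₁` along `a₁` yields one of the comatch `h₂` along `a₂` such that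
the two extended squares again form a double pushout, now over `Y`. -/
theorem exists_extension {B₁ B₂ D₁ D₂ Z₁ Z₂ : DMGraph} {f₁ : GraphHom A B₁} {f₂ : GraphHom A B₂}
    {h₁ : GraphHom B₁ D₁} {h₂ : GraphHom B₂ D₂} {i₁ : GraphHom C D₁} {i₂ : GraphHom C D₂}
    {yk : GraphHom A Y} {a₁ : GraphHom B₁ Z₁} {a₂ : GraphHom B₂ Z₂} {y₁ : GraphHom Y Z₁}
    {y₂ : GraphHom Y Z₂} {q₁ : GraphHom Z₁ D₁}
    (po₁ : IsInjPushoutSq f₁ g h₁ i₁) (po₂ : IsInjPushoutSq f₂ g h₂ i₂)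
    (inner₁ : IsInjPushoutSq f₁ yk a₁ y₁) (inner₂ : IsInjPushoutSq f₂ yk a₂ y₂)
    (hq₁ : q₁.Injective) (hqa₁ : q₁.comp a₁ = h₁) :
    ∃ (m : GraphHom Y C) (q₂ : GraphHom Z₂ D₂), q₂.comp a₂ = h₂ ∧
      IsInjPushoutSq y₁ m q₁ i₁ ∧ IsInjPushoutSq y₂ m q₂ i₂ := by
  obtain ⟨m, hm, hmk, sq₁⟩ := po₁.exists_decomp inner₁ hq₁ hqa₁
  obtain ⟨q₂, hqa₂, sq₂⟩ := po₂.exists_paste inner₂ hm hmk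
  exact ⟨m, q₂, hqa₂, sq₁, sq₂⟩

end IsInjPushoutSq

structure PartialGraphHom (C B : DMGraph) : Type where
  fV : C.V → Option B.V
  fE : C.E → Option B.E
  src : ∀ ⦃e e'⦄, fE e = some e' → fV (C.s e) = some (B.s e')
  tgt : ∀ ⦃e e'⦄, fE e = some e' → fV (C.t e) = some (B.t e')

namespace PartialGraphHom

variable {B C G : DMGraph} (φ : PartialGraphHom C B)

def Injective : Prop :=
  PartInjective φ.fV ∧ PartInjective φ.fE

/-- `B` with the items of `C` at which `φ` is undefined attached to it. -/
def glue : DMGraph where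
  V := B.V ⊕ {v : C.V // φ.fV v = none}
  E := B.E ⊕ {e : C.E // φ.fE e = none}
  s := Sum.elim (Sum.inl ∘ B.s) fun e => sumOfOption φ.fV (C.s e.1)
  t := Sum.elim (Sum.inl ∘ B.t) fun e => sumOfOption φ.fV (C.t e.1)

def inl : GraphHom B φ.glue := ⟨Sum.inl, Sum.inl, fun _ => rfl, fun _ => rfl⟩

def inr : GraphHom C φ.glue where
  fV := sumOfOption φ.fV
  fE := sumOfOption φ.fE
  src e := by
    cases he : φ.fE e with
    | some e' => rw [sumOfOption_eq_inl_iff.2 he, sumOfOption_eq_inl_iff.2 (φ.src he)]; rfl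
    | none => rw [sumOfOption_of_eq_none he]; rfl
  tgt e := by
    cases he : φ.fE e with
    | some e' => rw [sumOfOption_eq_inl_iff.2 he, sumOfOption_eq_inl_iff.2 (φ.tgt he)]; rfl
    | none => rw [sumOfOption_of_eq_none he]; rfl

theorem inl_injective : φ.inl.Injective :=
  ⟨Sum.inl_injective, Sum.inl_injective⟩

theorem inr_injective (hφ : φ.Injective) : φ.inr.Injective :=
  ⟨sumOfOption_injective hφ.1, sumOfOption_injective hφ.2⟩

theorem glue_finite (hB : B.Finite) (hC : C.Finite) : φ.glue.Finite := by
  obtain ⟨_, _⟩ := hB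
  obtain ⟨_, _⟩ := hC
  exact ⟨inferInstanceAs (Finite (_ ⊕ _)), inferInstanceAs (Finite (_ ⊕ _))⟩

def lift (u : GraphHom B G) (v : GraphHom C G)
    (hV : ∀ x y, φ.fV x = some y → u.fV y = v.fV x) : GraphHom φ.glue G where
  fV := Sum.elim u.fV (v.fV ∘ Subtype.val)
  fE := Sum.elim u.fE (v.fE ∘ Subtype.val)
  src := by
    rintro (e | ⟨e, -⟩)
    · exact u.src e
    · exact (v.src e).trans (sumElim_sumOfOption hV _).symm
  tgt := by
    rintro (e | ⟨e, -⟩)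
    · exact u.tgt e
    · exact (v.tgt e).trans (sumElim_sumOfOption hV _).symm

variable {φ} {u : GraphHom B G} {v : GraphHom C G} {hV : ∀ x y, φ.fV x = some y → u.fV y = v.fV x}

theorem lift_comp_inl : (φ.lift u v hV).comp φ.inl = u := rfl

theorem lift_comp_inr (hE : ∀ x y, φ.fE x = some y → u.fE y = v.fE x) :
    (φ.lift u v hV).comp φ.inr = v :=
  GraphHom.ext (funext (sumElim_sumOfOption hV)) (funext (sumElim_sumOfOption hE))

theorem lift_injective (hu : u.Injective) (hv : v.Injective)
    (hV' : ∀ x y, u.fV y = v.fV x → φ.fV x = some y)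
    (hE' : ∀ x y, u.fE y = v.fE x → φ.fE x = some y) : (φ.lift u v hV).Injective := by
  refine ⟨hu.1.sumElim (hv.1.comp Subtype.val_injective) ?_,
    hu.2.sumElim (hv.2.comp Subtype.val_injective) ?_⟩
  · rintro y ⟨x, hx⟩ h
    simp [hV' x y h] at hx
  · rintro y ⟨x, hx⟩ h
    simp [hE' x y h] at hx

end PartialGraphHom

namespace GraphHom

variable {A B C : DMGraph}

/-- The partial morphism `C ⇀ B` given by `f ∘ g⁻¹`; its gluing is the pushout of `f` and `g`. -/
noncomputable def glueAlong (f : GraphHom A B) (g : GraphHom A C) (hg : g.Injective) :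
    PartialGraphHom C B where
  fV := Option.map f.fV ∘ Function.partialInv g.fV
  fE := Option.map f.fE ∘ Function.partialInv g.fE
  src e e' he := by
    obtain ⟨a, ha, rfl⟩ := Option.map_eq_some_iff.1 he
    rw [← (hg.2.isPartialInv a e).1 ha, g.src, Function.comp_apply,
      Function.partialInv_left hg.1, Option.map_some, f.src]
  tgt e e' he := by
    obtain ⟨a, ha, rfl⟩ := Option.map_eq_some_iff.1 he
    rw [← (hg.2.isPartialInv a e).1 ha, g.tgt, Function.comp_apply,
      Function.partialInv_left hg.1, Option.map_some, f.tgt]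

theorem isInjPushoutSq_glueAlong {f : GraphHom A B} {g : GraphHom A C} (hf : f.Injective)
    (hg : g.Injective) : IsInjPushoutSq f g (f.glueAlong g hg).inl (f.glueAlong g hg).inr :=
  ⟨isInjPushout_sumOfOption hf.1 hg.1, isInjPushout_sumOfOption hf.2 hg.2⟩

theorem glueAlong_injective {f : GraphHom A B} {g : GraphHom A C} (hf : f.Injective)
    (hg : g.Injective) : (f.glueAlong g hg).Injective :=
  ⟨partInjective_map_partialInv hf.1 hg.1, partInjective_map_partialInv hf.2 hg.2⟩

end GraphHom

theorem IsPushoutSq.isInjPushoutSq {A B C D : DMGraph} {f : GraphHom A B} {g : GraphHom A C}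
    {h : GraphHom B D} {i : GraphHom C D} (po : IsPushoutSq f g h i) (hf : f.Injective)
    (hg : g.Injective) : IsInjPushoutSq f g h i := by
  set φ := f.glueAlong g hg
  have glued := GraphHom.isInjPushoutSq_glueAlong hf hg
  obtain ⟨w, ⟨hwh, hwi⟩, -⟩ := po.desc φ.inl φ.inr glued.comm
  obtain ⟨w', hw'h, hw'i⟩ := glued.exists_desc h i po.comm
  have hww' : w'.comp w = GraphHom.id D :=
    (po.desc h i po.comm).unique
      ⟨by rw [GraphHom.comp_assoc, hwh, hw'h], by rw [GraphHom.comp_assoc, hwi, hw'i]⟩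
      ⟨GraphHom.id_comp h, GraphHom.id_comp i⟩
  have hw : w.Injective :=
    GraphHom.Injective.of_comp (g := w') (hww' ▸ ⟨Function.injective_id, Function.injective_id⟩)
  rw [← hwh, ← hwi] at glued
  exact glued.of_comp hw

namespace DMGraph

variable {G H : DMGraph}

def IsSubgraph (G : DMGraph) (SV : Set G.V) (SE : Set G.E) : Prop :=
  ∀ e ∈ SE, G.s e ∈ SV ∧ G.t e ∈ SV

theorem IsSubgraph.preimage {SV : Set H.V} {SE : Set H.E} (hS : H.IsSubgraph SV SE)
    (f : GraphHom G H) : G.IsSubgraph (f.fV ⁻¹' SV) (f.fE ⁻¹' SE) := by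
  intro e he
  simp only [Set.mem_preimage, ← f.src, ← f.tgt]
  exact hS _ he

def sub {SV : Set G.V} {SE : Set G.E} (hS : G.IsSubgraph SV SE) : DMGraph where
  V := SV
  E := SE
  s e := ⟨G.s e, (hS e e.2).1⟩
  t e := ⟨G.t e, (hS e e.2).2⟩

def subι {SV : Set G.V} {SE : Set G.E} (hS : G.IsSubgraph SV SE) : GraphHom (sub hS) G :=
  ⟨Subtype.val, Subtype.val, fun _ => rfl, fun _ => rfl⟩

theorem subι_injective {SV : Set G.V} {SE : Set G.E} (hS : G.IsSubgraph SV SE) :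
    (subι hS).Injective :=
  ⟨Subtype.val_injective, Subtype.val_injective⟩

theorem sub_finite {SV : Set G.V} {SE : Set G.E} (hS : G.IsSubgraph SV SE) (hG : G.Finite) :
    (sub hS).Finite :=
  ⟨@Subtype.finite _ hG.1 _, @Subtype.finite _ hG.2 _⟩

end DMGraph

theorem GraphHom.isSubgraph_range {G H : DMGraph} (f : GraphHom G H) :
    H.IsSubgraph (Set.range f.fV) (Set.range f.fE) := by
  rintro _ ⟨e, rfl⟩
  exact ⟨⟨G.s e, (f.src e).symm⟩, ⟨G.t e, (f.tgt e).symm⟩⟩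

theorem apply_mem_compl_image {α β γ : Type} {r : α → β} {a : β → γ} (ha : Function.Injective a)
    (κ : α) : a (r κ) ∈ (a '' (Set.range r)ᶜ)ᶜ := by
  rintro ⟨ρ, hρ, hρκ⟩
  exact hρ ⟨κ, (ha hρκ).symm⟩

theorem isInjPushout_compl_image {α β γ : Type} {r : α → β} {a : β → γ}
    (ha : Function.Injective a) :
    IsInjPushout r (Set.codRestrict (a ∘ r) (a '' (Set.range r)ᶜ)ᶜ (apply_mem_compl_image ha))
      a Subtype.val := by
  refine ⟨ha, Subtype.val_injective, fun _ => rfl, fun z => ?_, fun ρ z hρz => ?_⟩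
  · by_cases hz : z ∈ a '' (Set.range r)ᶜ
    · obtain ⟨ρ, -, rfl⟩ := hz
      exact .inl ⟨ρ, rfl⟩
    · exact .inr ⟨⟨z, hz⟩, rfl⟩
  · obtain ⟨κ, rfl⟩ : ρ ∈ Set.range r := by
      by_contra hρ
      exact z.2 ⟨ρ, hρ, hρz⟩
    exact ⟨κ, rfl, Subtype.ext hρz⟩

section Dangling

variable {K R C : DMGraph} (a : GraphHom R C) (r : GraphHom K R)

def Dangling : Prop :=
  C.IsSubgraph (a.fV '' (Set.range r.fV)ᶜ)ᶜ (a.fE '' (Set.range r.fE)ᶜ)ᶜ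

variable {a r}

def Dangling.complementMap (hD : Dangling a r) (ha : a.Injective) :
    GraphHom K (DMGraph.sub hD) where
  fV := Set.codRestrict (a.fV ∘ r.fV) _ (apply_mem_compl_image (r := r.fV) ha.1)
  fE := Set.codRestrict (a.fE ∘ r.fE) _ (apply_mem_compl_image (r := r.fE) ha.2)
  src κ := Subtype.ext (by simp [a.src, r.src, DMGraph.sub])
  tgt κ := Subtype.ext (by simp [a.tgt, r.tgt, DMGraph.sub])

theorem Dangling.complementMap_injective (hD : Dangling a r) (ha : a.Injective)
    (hr : r.Injective) : (hD.complementMap ha).Injective :=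
  ⟨fun _ _ h => hr.1 (ha.1 (congrArg Subtype.val h)),
    fun _ _ h => hr.2 (ha.2 (congrArg Subtype.val h))⟩

theorem Dangling.isInjPushoutSq (hD : Dangling a r) (ha : a.Injective) :
    IsInjPushoutSq r (hD.complementMap ha) a (DMGraph.subι hD) :=
  ⟨isInjPushout_compl_image ha.1, isInjPushout_compl_image ha.2⟩

/-- The items of `C` that are not deleted are exactly those that `q` maps into the range of `d`,
which is a subgraph. -/
theorem IsInjPushoutSq.dangling {D H : DMGraph} {k : GraphHom K D} {h : GraphHom R H}
    {d : GraphHom D H} {q : GraphHom C H} (po : IsInjPushoutSq r k h d) (hq : q.Injective)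
    (hqa : q.comp a = h) : Dangling a r := by
  have hV : (a.fV '' (Set.range r.fV)ᶜ)ᶜ = q.fV ⁻¹' Set.range d.fV :=
    Set.ext fun x => (po.V.mem_range_comp_iff hq.1 (GraphHom.congr_fV hqa) x).symm
  have hE : (a.fE '' (Set.range r.fE)ᶜ)ᶜ = q.fE ⁻¹' Set.range d.fE :=
    Set.ext fun x => (po.E.mem_range_comp_iff hq.2 (GraphHom.congr_fE hqa) x).symm
  rw [Dangling, hV, hE]
  exact d.isSubgraph_range.preimage q

end Dangling

section Combinators

variable {A G : DMGraph} {p : GraphHom A G}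

def Cond.fls (A : DMGraph) : Cond A := .not (.tru A)

def Cond.or (c₁ c₂ : Cond A) : Cond A := .not (.and (.not c₁) (.not c₂))

def Cond.any : List (Cond A) → Cond A
  | [] => .fls A
  | c :: cs => c.or (Cond.any cs)

noncomputable def Cond.iAny {ι : Type} [Finite ι] (c : ι → Cond A) : Cond A :=
  .any ((Finite.exists_univ_list ι).choose.map c)

@[simp] theorem sat_fls : Sat p (.fls A) ↔ False := by
  simp [Cond.fls, Sat]

@[simp] theorem sat_or {c₁ c₂ : Cond A} : Sat p (c₁.or c₂) ↔ Sat p c₁ ∨ Sat p c₂ := by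
  simp only [Cond.or, Sat]
  tauto

theorem sat_any (cs : List (Cond A)) : Sat p (.any cs) ↔ ∃ c ∈ cs, Sat p c := by
  induction cs <;> simp_all [Cond.any]

@[simp] theorem sat_iAny {ι : Type} [Finite ι] (c : ι → Cond A) :
    Sat p (.iAny c) ↔ ∃ i, Sat p (c i) := by
  simp [Cond.iAny, sat_any, (Finite.exists_univ_list ι).choose_spec.2]

end Combinators

section Overlap

variable {A C A' G : DMGraph} (a : GraphHom A C) (b : GraphHom A A')

/-- The overlap graph of `C` and `A'` over `A` is `θ.glue`. -/
structure Overlap extends PartialGraphHom C A' where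
  injective : toPartialGraphHom.Injective
  fV_comp : ∀ x, fV (a.fV x) = some (b.fV x)
  fE_comp : ∀ x, fE (a.fE x) = some (b.fE x)

theorem Overlap.finite (hC : C.Finite) (hA' : A'.Finite) : Finite (Overlap a b) := by
  obtain ⟨_, _⟩ := hC
  obtain ⟨_, _⟩ := hA'
  refine Finite.of_injective (fun θ : Overlap a b => (θ.fV, θ.fE)) ?_
  rintro ⟨⟨_, _, _, _⟩, _, _, _⟩ ⟨⟨_, _, _, _⟩, _, _, _⟩ h
  obtain ⟨rfl, rfl⟩ := Prod.mk.inj h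
  rfl

variable {a b}

theorem Overlap.comm (θ : Overlap a b) : θ.inr.comp a = θ.inl.comp b :=
  GraphHom.ext (funext fun x => sumOfOption_eq_inl_iff.2 (θ.fV_comp x))
    (funext fun x => sumOfOption_eq_inl_iff.2 (θ.fE_comp x))

theorem exists_overlap {p : GraphHom A' G} {q : GraphHom C G} (hp : p.Injective)
    (hq : q.Injective) (hqp : q.comp a = p.comp b) :
    ∃ (θ : Overlap a b) (u : GraphHom θ.glue G),
      u.Injective ∧ u.comp θ.inl = p ∧ u.comp θ.inr = q := by
  have hV : ∀ x y, Function.partialInv p.fV (q.fV x) = some y ↔ p.fV y = q.fV x :=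
    fun x y => hp.1.isPartialInv y (q.fV x)
  have hE : ∀ x y, Function.partialInv p.fE (q.fE x) = some y ↔ p.fE y = q.fE x :=
    fun x y => hp.2.isPartialInv y (q.fE x)
  let θ : Overlap a b :=
    { fV := Function.partialInv p.fV ∘ q.fV
      fE := Function.partialInv p.fE ∘ q.fE
      src e e' he := by
        simp only [Function.comp_apply, hV, hE] at he ⊢
        rw [← p.src, he, q.src]
      tgt e e' he := by
        simp only [Function.comp_apply, hV, hE] at he ⊢
        rw [← p.tgt, he, q.tgt]
      injective := ⟨fun x x' y h h' => hq.1 (((hV x y).1 h).symm.trans ((hV x' y).1 h')),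
        fun x x' y h h' => hq.2 (((hE x y).1 h).symm.trans ((hE x' y).1 h'))⟩
      fV_comp x := (hV _ _).2 (GraphHom.congr_fV hqp x).symm
      fE_comp x := (hE _ _).2 (GraphHom.congr_fE hqp x).symm }
  exact ⟨θ, θ.lift p q fun x y => (hV x y).1,
    θ.lift_injective hp hq (fun x y => (hV x y).2) (fun x y => (hE x y).2),
    θ.lift_comp_inl, θ.lift_comp_inr fun x y => (hE x y).1⟩

end Overlap

noncomputable def Cond.shift : {A : DMGraph} → Cond A → {A' : DMGraph} → GraphHom A A' →
    A'.Finite → Cond A'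
  | _, .tru _, A', _, _ => .tru A'
  | _, .not c, _, b, hA' => .not (c.shift b hA')
  | _, .and c₁ c₂, _, b, hA' => .and (c₁.shift b hA') (c₂.shift b hA')
  | _, .ex a hC _ c, _, b, hA' =>
    haveI := Overlap.finite a b hC hA'
    .iAny fun θ : Overlap a b =>
      .ex θ.inl (θ.glue_finite hA' hC) θ.inl_injective (c.shift θ.inr (θ.glue_finite hA' hC))

theorem sat_shift {A : DMGraph} (c : Cond A) {A' : DMGraph} (b : GraphHom A A')
    (hA' : A'.Finite) {G : DMGraph} {p : GraphHom A' G} (hp : p.Injective) :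
    Sat p (c.shift b hA') ↔ Sat (p.comp b) c := by
  induction c generalizing A' with
  | tru => simp [Cond.shift, Sat]
  | not c ih => simp only [Cond.shift, Sat, ih b hA' hp]
  | and c₁ c₂ ih₁ ih₂ => simp only [Cond.shift, Sat, ih₁ b hA' hp, ih₂ b hA' hp]
  | ex a hC ha c ih =>
    simp only [Cond.shift, sat_iAny, Sat]
    constructor
    · rintro ⟨θ, u, hu, hup, hs⟩
      rw [ih θ.inr _ hu] at hs
      refine ⟨u.comp θ.inr, hu.comp (θ.inr_injective θ.injective), ?_, hs⟩
      rw [GraphHom.comp_assoc, θ.comm, ← GraphHom.comp_assoc, hup]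
    · rintro ⟨q, hq, hqa, hs⟩
      obtain ⟨θ, u, hu, hup, huq⟩ := exists_overlap hp hq hqa
      exact ⟨θ, u, hu, hup, by rwa [ih θ.inr _ hu, huq]⟩

theorem gSat_iff_sat_shift {L G : DMGraph} (d : Cond DMGraph.empty) (hL : L.Finite)
    {g : GraphHom L G} (hg : g.Injective) : GSat G d ↔ Sat g (d.shift (emptyHom L) hL) := by
  rw [sat_shift d _ hL hg, GraphHom.comp_emptyHom]
  rfl

open Classical in
noncomputable def Cond.toLeft : {R : DMGraph} → Cond R → {K L : DMGraph} →
    (l : GraphHom K L) → (r : GraphHom K R) → l.Injective → r.Injective → L.Finite → Cond L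
  | _, .tru _, _, L, _, _, _, _, _ => .tru L
  | _, .not c, _, _, l, r, hl, hr, hL => .not (c.toLeft l r hl hr hL)
  | _, .and c₁ c₂, _, _, l, r, hl, hr, hL =>
    .and (c₁.toLeft l r hl hr hL) (c₂.toLeft l r hl hr hL)
  | _, .ex a hC ha c, _, _, l, r, hl, hr, hL =>
    if hD : Dangling a r then
      .ex (l.glueAlong _ (hD.complementMap_injective ha hr)).inl
        (PartialGraphHom.glue_finite _ hL (DMGraph.sub_finite hD hC))
        (PartialGraphHom.inl_injective _)
        (c.toLeft _ (DMGraph.subι hD)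
          (PartialGraphHom.inr_injective _ (GraphHom.glueAlong_injective hl _))
          (DMGraph.subι_injective hD)
          (PartialGraphHom.glue_finite _ hL (DMGraph.sub_finite hD hC)))
    else .fls _

theorem sat_toLeft {R : DMGraph} (c : Cond R) {K L : DMGraph} {l : GraphHom K L}
    {r : GraphHom K R} (hl : l.Injective) (hr : r.Injective) (hL : L.Finite)
    {G H D : DMGraph} {g : GraphHom L G} {h : GraphHom R H} {k : GraphHom K D}
    {dG : GraphHom D G} {dH : GraphHom D H}
    (po₁ : IsInjPushoutSq l k g dG) (po₂ : IsInjPushoutSq r k h dH) :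
    Sat g (c.toLeft l r hl hr hL) ↔ Sat h c := by
  induction c generalizing K L G H D with
  | tru => simp [Cond.toLeft, Sat]
  | not c ih => simp only [Cond.toLeft, Sat, ih hl hr hL po₁ po₂]
  | and c₁ c₂ ih₁ ih₂ =>
    simp only [Cond.toLeft, Sat, ih₁ hl hr hL po₁ po₂, ih₂ hl hr hL po₁ po₂]
  | ex a hC ha c ih =>
    by_cases hD : Dangling a r
    · have innerL := GraphHom.isInjPushoutSq_glueAlong hl (hD.complementMap_injective ha hr)
      have innerR := hD.isInjPushoutSq ha
      simp only [Cond.toLeft, dif_pos hD, Sat]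
      constructor
      · rintro ⟨q', hq', hq'a, hs⟩
        obtain ⟨m, q, hqa, sq₁, sq₂⟩ := po₁.exists_extension po₂ innerL innerR hq' hq'a
        exact ⟨q, sq₂.inl_injective, hqa, (ih _ _ _ sq₁ sq₂).1 hs⟩
      · rintro ⟨q, hq, hqa, hs⟩
        obtain ⟨m, q', hq'a, sq₂, sq₁⟩ := po₂.exists_extension po₁ innerR innerL hq hqa
        exact ⟨q', sq₁.inl_injective, hq'a, (ih _ _ _ sq₁ sq₂).2 hs⟩
    · simp only [Cond.toLeft, dif_neg hD, sat_fls, Sat, false_iff]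
      rintro ⟨q, hq, hqa, -⟩
      exact hD (po₂.dangling hq hqa)

theorem cpres_exists_general {K L R : DMGraph} (hL : L.Finite) (hR : R.Finite)
    (l : GraphHom K L) (hl : l.Injective) (r : GraphHom K R) (hr : r.Injective)
    (d : Cond DMGraph.empty) :
    ∃ ac : Cond L,
      (∀ (G H D : DMGraph) (g : GraphHom L G) (h : GraphHom R H) (k : GraphHom K D)
        (dG : GraphHom D G) (dH : GraphHom D H),
        g.Injective → h.Injective →
        IsPushoutSq l k g dG → IsPushoutSq r k h dH →
        (Sat g ac ↔ (GSat G d → GSat H d))) ∧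
      (∀ (G H D : DMGraph) (g : GraphHom L G) (h : GraphHom R H) (k : GraphHom K D)
        (dG : GraphHom D G) (dH : GraphHom D H),
        g.Injective → h.Injective →
        IsPushoutSq l k g dG → IsPushoutSq r k h dH →
        Sat g ac → GSat G d → GSat H d) := by
  let ac : Cond L :=
    (Cond.not (d.shift (emptyHom L) hL)).or ((d.shift (emptyHom R) hR).toLeft l r hl hr hL)
  have sat_ac : ∀ (G H D : DMGraph) (g : GraphHom L G) (h : GraphHom R H) (k : GraphHom K D)
      (dG : GraphHom D G) (dH : GraphHom D H), g.Injective → h.Injective →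
      IsPushoutSq l k g dG → IsPushoutSq r k h dH → (Sat g ac ↔ (GSat G d → GSat H d)) := by
    intro G H D g h k dG dH hg hh po₁ po₂
    have hk : k.Injective := GraphHom.Injective.of_comp (g := dG) (po₁.comm ▸ hg.comp hl)
    rw [sat_or, Sat, gSat_iff_sat_shift d hL hg, gSat_iff_sat_shift d hR hh,
      sat_toLeft _ hl hr hL (po₁.isInjPushoutSq hl hk) (po₂.isInjPushoutSq hr hk)]
    tauto
  exact ⟨ac, sat_ac, fun G H D g h k dG dH hg hh po₁ po₂ =>
    (sat_ac G H D g h k dG dH hg hh po₁ po₂).1⟩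

/-- Constraint-preserving application conditions: for a rule `p = ⟨L ↩l K ↪r R⟩` of
finite directed multigraphs and a constraint `d`, there is a condition `ac` over `L`
such that for every direct transformation `G ⇒_{p,g,h} H`, the match `g` satisfies
`ac` iff (`G ⊨ d` implies `H ⊨ d`).  In particular, the rule equipped with `ac`
is `d`-preserving. -/
theorem cpres_exists {K L R : DMGraph} (hL : L.Finite) (hK : K.Finite) (hR : R.Finite)
    (l : GraphHom K L) (hl : l.Injective) (r : GraphHom K R) (hr : r.Injective)
    (d : Cond DMGraph.empty) :
    ∃ ac : Cond L,
      (∀ (G H D : DMGraph) (g : GraphHom L G) (h : GraphHom R H) (k : GraphHom K D)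
        (dG : GraphHom D G) (dH : GraphHom D H),
        g.Injective → h.Injective →
        IsPushoutSq l k g dG → IsPushoutSq r k h dH →
        (Sat g ac ↔ (GSat G d → GSat H d))) ∧
      (∀ (G H D : DMGraph) (g : GraphHom L G) (h : GraphHom R H) (k : GraphHom K D)
        (dG : GraphHom D G) (dH : GraphHom D H),
        g.Injective → h.Injective →
        IsPushoutSq l k g dG → IsPushoutSq r k h dH →
        Sat g ac → GSat G d → GSat H d) :=
  cpres_exists_general hL hR l hl r hr d
end

section
/- Repair of a negative constraint by deletion (basic repair, ∄-case): let C be a finite directed multigraph with at least one node. Define the deletion step relation ▷ on finite directed multigraphs by: G ▷ H iff there is an injective morphism q : C → G and either (if C has at least one edge) H is obtained from G by removing a single edge in the image of q, or (if C has no edges) H is obtained from G by removing a single node in the image of q together with all edges incident to it. Then: (1) ▷ is terminating — there is no infinite sequence G_0 ▷ G_1 ▷ G_2 ▷ ⋯ of finite graphs; and (2) a finite graph G admits no ▷-step if and only if there is no injective morphism C → G. Hence iterating deletion steps from any finite graph terminates in a graph satisfying the negative constraint ∄C, and a graph already satisfying ∄C is left unchanged. -/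
/-- The graph obtained from `G` by removing the single edge `e₀`. -/
def removeEdge (G : DMGraph) (e₀ : G.E) : DMGraph where
  V := G.V
  E := {e : G.E // e ≠ e₀}
  s e := G.s e.1
  t e := G.t e.1

/-- The graph obtained from `G` by removing the single node `v₀` together with all
edges incident to it. -/
def removeNode (G : DMGraph) (v₀ : G.V) : DMGraph where
  V := {v : G.V // v ≠ v₀}
  E := {e : G.E // G.s e ≠ v₀ ∧ G.t e ≠ v₀}
  s e := ⟨G.s e.1, e.2.1⟩
  t e := ⟨G.t e.1, e.2.2⟩

/-- The deletion step relation for the negative constraint `∄C`: `DelStep C G H` iff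
there is an injective morphism `q : C → G` and either (if `C` has at least one edge)
`H` is obtained from `G` by removing a single edge in the image of `q`, or (if `C`
has no edges) `H` is obtained from `G` by removing a single node in the image of `q`
together with all edges incident to it. -/
def DelStep (C G H : DMGraph) : Prop :=
  ∃ q : GraphHom C G, q.Injective ∧
    ((∃ e : C.E, H = removeEdge G (q.fE e)) ∨
     (IsEmpty C.E ∧ ∃ v : C.V, H = removeNode G (q.fV v)))

/-! Every deletion step strictly decreases the number of nodes plus edges of a finite graph,
so no infinite chain of steps exists. A step presupposes an injective morphism `C → G`, and
conversely such a morphism always allows a step: remove the image of an edge of `C` if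
there is one, and otherwise the image of a node, which exists since `C.V` is nonempty. -/

noncomputable def DMGraph.size (G : DMGraph) : ℕ := Nat.card G.V + Nat.card G.E

lemma size_removeEdge_lt {G : DMGraph} (hG : G.Finite) (e₀ : G.E) :
    (removeEdge G e₀).size < G.size := by
  have := hG.2
  have hE : Nat.card {e : G.E // e ≠ e₀} < Nat.card G.E :=
    Finite.card_subtype_lt (x := e₀) (not_not.mpr rfl)
  exact Nat.add_lt_add_left hE _

lemma size_removeNode_lt {G : DMGraph} (hG : G.Finite) (v₀ : G.V) :
    (removeNode G v₀).size < G.size := by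
  obtain ⟨_, _⟩ := hG
  have hV : Nat.card {v : G.V // v ≠ v₀} < Nat.card G.V :=
    Finite.card_subtype_lt (x := v₀) (not_not.mpr rfl)
  have hE : Nat.card {e : G.E // G.s e ≠ v₀ ∧ G.t e ≠ v₀} ≤ Nat.card G.E :=
    Finite.card_subtype_le _
  exact Nat.add_lt_add_of_lt_of_le hV hE

lemma DelStep.size_lt {C G H : DMGraph} (hG : G.Finite) (h : DelStep C G H) :
    H.size < G.size := by
  obtain ⟨q, -, ⟨e, rfl⟩ | ⟨-, v, rfl⟩⟩ := h
  · exact size_removeEdge_lt hG _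
  · exact size_removeNode_lt hG _

lemma not_exists_delStep_chain (C : DMGraph) :
    ¬ ∃ f : ℕ → DMGraph, (∀ n, (f n).Finite) ∧ ∀ n, DelStep C (f n) (f (n + 1)) := by
  rintro ⟨f, hfin, hstep⟩
  obtain ⟨n, hn⟩ := WellFounded.not_rel_apply_succ (r := (· < ·)) (DMGraph.size ∘ f)
  exact hn ((hstep n).size_lt (hfin n))

lemma DelStep.exists_injective {C G H : DMGraph} (h : DelStep C G H) :
    ∃ q : GraphHom C G, q.Injective :=
  let ⟨q, hq, _⟩ := h
  ⟨q, hq⟩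

lemma exists_delStep_of_injective {C G : DMGraph} [Nonempty C.V] {q : GraphHom C G}
    (hq : q.Injective) : ∃ H, DelStep C G H := by
  cases isEmpty_or_nonempty C.E with
  | inl hE =>
    obtain ⟨v⟩ := ‹Nonempty C.V›
    exact ⟨removeNode G (q.fV v), q, hq, Or.inr ⟨hE, v, rfl⟩⟩
  | inr hE =>
    obtain ⟨e⟩ := hE
    exact ⟨removeEdge G (q.fE e), q, hq, Or.inl ⟨e, rfl⟩⟩

theorem delete_repair_general (C : DMGraph) (hCV : Nonempty C.V) :
    (¬ ∃ f : ℕ → DMGraph, (∀ n, (f n).Finite) ∧ ∀ n, DelStep C (f n) (f (n + 1))) ∧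
    (∀ G : DMGraph, G.Finite →
      ((¬ ∃ H, DelStep C G H) ↔ ¬ ∃ q : GraphHom C G, q.Injective)) := by
  refine ⟨not_exists_delStep_chain C, fun G _ => not_congr ⟨?_, ?_⟩⟩
  · rintro ⟨H, h⟩
    exact h.exists_injective
  · rintro ⟨q, hq⟩
    exact exists_delStep_of_injective hq

/-- Basic repair for a negative constraint `∄C`, where `C` is a finite graph with at
least one node: (1) the deletion step relation is terminating on finite graphs, and
(2) a finite graph admits no deletion step iff there is no injective morphism
`C → G`, i.e. iff it satisfies `∄C`. -/
theorem delete_repair (C : DMGraph) (hC : C.Finite) (hCV : Nonempty C.V) :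
    (¬ ∃ f : ℕ → DMGraph, (∀ n, (f n).Finite) ∧ ∀ n, DelStep C (f n) (f (n + 1))) ∧
    (∀ G : DMGraph, G.Finite →
      ((¬ ∃ H, DelStep C G H) ↔ ¬ ∃ q : GraphHom C G, q.Injective)) :=
  delete_repair_general C hCV
end
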